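/- arXiv:1608.02188 — 3 statements merged into one kernel-verified Lean document; each statement's English description precedes it below -/
import Mathlib

section
/- For nonnegative segregated families (u_l) and (v_l) on a set Ω, the following chain of inclusions holds for each index l: {x : u_l(x) > v_l(x)} ⊆ {x : û_l(x) > v̂_l(x)} ⊆ {x : u_l(x) ≥ v_l(x)}, where û_l = u_l − ∑_{p≠l} u_p and v̂_l = v_l − ∑_{p≠l} v_p. -/
/-!
If `v l x < u l x` then `u l x > 0`, so segregation kills every `u p x` with `p ≠ l` and
`û l x = u l x`, while `v̂ l x ≤ v l x` by nonnegativity; hence `v̂ l x < û l x`. The second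
inclusion is the same fact with the roles of `u` and `v` exchanged, read contrapositively.
-/

open Finset

theorem Finset.sum_erase_eq_zero_of_pairwise_mul_eq_zero {ι R : Type*} [DecidableEq ι]
    [NonUnitalNonAssocSemiring R] [NoZeroDivisors R] {g : ι → R}
    (hg : Pairwise fun i j => g i * g j = 0) (s : Finset ι) {l : ι} (hl : g l ≠ 0) :
    ∑ p ∈ s.erase l, g p = 0 :=
  sum_eq_zero fun _ hp => (mul_eq_zero.mp (hg (ne_of_mem_erase hp))).resolve_right hl

theorem sub_sum_erase_lt_sub_sum_erase_of_lt {ι : Type*} [DecidableEq ι] {f g : ι → ℝ}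
    (hf : ∀ i, 0 ≤ f i) (hg : Pairwise fun i j => g i * g j = 0) (s : Finset ι) {l : ι}
    (h : f l < g l) :
    f l - ∑ p ∈ s.erase l, f p < g l - ∑ p ∈ s.erase l, g p :=
  calc f l - ∑ p ∈ s.erase l, f p ≤ f l := sub_le_self _ (sum_nonneg fun p _ => hf p)
    _ < g l := h
    _ = g l - ∑ p ∈ s.erase l, g p := by
      rw [sum_erase_eq_zero_of_pairwise_mul_eq_zero hg s ((hf l).trans_lt h).ne', sub_zero]

/-- Chain of inclusions `{u l > v l} ⊆ {û l > v̂ l} ⊆ {u l ≥ v l}` for nonnegative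
segregated families. -/
theorem stmt_2 {Ω : Type*} {m : ℕ} (u v : Fin m → Ω → ℝ)
    (hupos : ∀ i x, 0 ≤ u i x) (hvpos : ∀ i x, 0 ≤ v i x)
    (huseg : ∀ i j x, i ≠ j → u i x * u j x = 0)
    (hvseg : ∀ i j x, i ≠ j → v i x * v j x = 0)
    (uhat vhat : Fin m → Ω → ℝ)
    (huhat : ∀ l x, uhat l x = u l x - ∑ p ∈ Finset.univ.erase l, u p x)
    (hvhat : ∀ l x, vhat l x = v l x - ∑ p ∈ Finset.univ.erase l, v p x) :
    ∀ l : Fin m,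
      {x : Ω | v l x < u l x} ⊆ {x : Ω | vhat l x < uhat l x} ∧
      {x : Ω | vhat l x < uhat l x} ⊆ {x : Ω | v l x ≤ u l x} := by
  intro l
  refine ⟨fun x hx => ?_, fun x hx => ?_⟩
  · simp only [Set.mem_ofPred_eq, huhat, hvhat] at hx ⊢
    exact sub_sum_erase_lt_sub_sum_erase_of_lt (hvpos · x) (huseg · · x) univ hx
  · simp only [Set.mem_ofPred_eq, huhat, hvhat] at hx ⊢
    exact not_lt.mp fun h =>
      (sub_sum_erase_lt_sub_sum_erase_of_lt (hupos · x) (hvseg · · x) univ h).asymm hx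
end

section
/- Let M = max_l max_{Ω_h} (û_l − û_h^l + V) where (u_l) and (u_h^l) are two nonnegative segregated families agreeing on the boundary, and V is any grid function. If the maximum M is attained at index l₀ and grid point z₀ with u_{l₀}(z₀) = u_h^{l₀}(z₀) = 0 and M > max_{Ω_h} V, then there exists t₀ ≠ l₀ such that u_l(z₀) = 0 for all l ≠ t₀ and M = u_h^{t₀}(z₀) − u_{t₀}(z₀) + V(z₀); consequently M ≤ R where R := max_l max_{Ω_h} (û_h^l − û_l + V). -/
/-!
Writing `û_l = 2 u_l - ∑ u`, maximality of `M` at `(l₀, z₀)`, where `u_{l₀}` and `u_h^{l₀}`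
vanish, gives `u_s(z₀) ≤ u_h^s(z₀)` for every `s`. As `M > V(z₀)` forces
`∑ u_h(z₀) > ∑ u(z₀) ≥ 0`, some `u_h^{t₀}(z₀)` is nonzero; by segregation it is the only
nonzero `u_h^p(z₀)`, so `u_{t₀}(z₀)` is the only possibly nonzero `u_p(z₀)`, and all hatted
quantities at `z₀` are read off from `u_{t₀}(z₀)` and `u_h^{t₀}(z₀)`.
-/

open Finset

theorem sub_sum_erase_eq_two_mul_sub_sum {κ R : Type*} [Fintype κ] [DecidableEq κ]
    [CommRing R] (f : κ → R) (l : κ) :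
    f l - ∑ p ∈ univ.erase l, f p = 2 * f l - ∑ p, f p := by
  rw [← add_sum_erase univ f (mem_univ l)]
  ring

theorem exists_forall_ne_eq_zero_of_sum_ne_zero {κ R : Type*} [Fintype κ]
    [CommRing R] [NoZeroDivisors R] {f : κ → R}
    (hseg : ∀ p q, p ≠ q → f p * f q = 0) (hsum : ∑ p, f p ≠ 0) :
    ∃ t, f t ≠ 0 ∧ ∀ p, p ≠ t → f p = 0 := by
  obtain ⟨t, -, ht⟩ := exists_ne_zero_of_sum_ne_zero hsum
  exact ⟨t, ht, fun p hp => (mul_eq_zero.mp (hseg p t hp)).resolve_right ht⟩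

theorem stmt_10_general {ι : Type*} [Fintype ι] {m : ℕ}
    (u uh : Fin m → ι → ℝ) (V : ι → ℝ)
    (hupos : ∀ l z, 0 ≤ u l z)
    (huhseg : ∀ p q : Fin m, ∀ z, p ≠ q → uh p z * uh q z = 0)
    (uhat uhhat : Fin m → ι → ℝ)
    (huhat : ∀ l z, uhat l z = u l z - ∑ p ∈ Finset.univ.erase l, u p z)
    (huhhat : ∀ l z, uhhat l z = uh l z - ∑ p ∈ Finset.univ.erase l, uh p z)
    (M : ℝ)
    (hMub : ∀ l : Fin m, ∀ z : ι, uhat l z - uhhat l z + V z ≤ M)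
    (l₀ : Fin m) (z₀ : ι)
    (hMatt : M = uhat l₀ z₀ - uhhat l₀ z₀ + V z₀)
    (hz₀ : u l₀ z₀ = 0 ∧ uh l₀ z₀ = 0)
    (hMV : ∀ z : ι, V z < M) :
    ∃ t₀ : Fin m, t₀ ≠ l₀ ∧ (∀ l : Fin m, l ≠ t₀ → u l z₀ = 0) ∧
      M = uh t₀ z₀ - u t₀ z₀ + V z₀ ∧
      (∃ l : Fin m, ∃ z : ι, M ≤ uhhat l z - uhat l z + V z) := by
  obtain ⟨hu₀, huh₀⟩ := hz₀
  have hat_u (l) : uhat l z₀ = 2 * u l z₀ - ∑ p, u p z₀ := by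
    rw [huhat, sub_sum_erase_eq_two_mul_sub_sum (u · z₀)]
  have hat_uh (l) : uhhat l z₀ = 2 * uh l z₀ - ∑ p, uh p z₀ := by
    rw [huhhat, sub_sum_erase_eq_two_mul_sub_sum (uh · z₀)]
  have hM : M = ∑ p, uh p z₀ - ∑ p, u p z₀ + V z₀ := by
    rw [hMatt, hat_u, hat_uh, hu₀, huh₀]
    ring
  have hle (s) : u s z₀ ≤ uh s z₀ := by
    have := hMub s z₀
    rw [hat_u, hat_uh] at this
    linarith
  have hsum_pos : 0 < ∑ p, uh p z₀ := by
    linarith [hMV z₀, sum_nonneg fun p (_ : p ∈ univ) => hupos p z₀]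
  obtain ⟨t₀, ht₀, huh_eq⟩ :=
    exists_forall_ne_eq_zero_of_sum_ne_zero (huhseg · · z₀) hsum_pos.ne'
  have hu_eq (l) (hl : l ≠ t₀) : u l z₀ = 0 :=
    le_antisymm ((hle l).trans_eq (huh_eq l hl)) (hupos l z₀)
  have hMt : M = uh t₀ z₀ - u t₀ z₀ + V z₀ := by
    rw [hM, Fintype.sum_eq_single t₀ huh_eq, Fintype.sum_eq_single t₀ hu_eq]
  refine ⟨t₀, fun h => ht₀ (h ▸ huh₀), hu_eq, hMt, t₀, z₀, ?_⟩
  rw [hat_u, hat_uh, Fintype.sum_eq_single t₀ huh_eq, Fintype.sum_eq_single t₀ hu_eq]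
  linarith

/-- Lemma 3.2 of the paper: if the maximum `M` of `û l - û_h l + V` over all indices and
grid points is attained at `(l₀, z₀)` with `u l₀ z₀ = u_h l₀ z₀ = 0` and
`M > max V`, then there is `t₀ ≠ l₀` with `u l z₀ = 0` for all `l ≠ t₀` and
`M = u_h t₀ z₀ - u t₀ z₀ + V z₀`; consequently `M ≤ R` where
`R = max_l max (û_h l - û l + V)`. -/
theorem stmt_10 {ι : Type*} [Fintype ι] {m : ℕ}
    (u uh : Fin m → ι → ℝ) (V : ι → ℝ)
    (hupos : ∀ l z, 0 ≤ u l z) (huhpos : ∀ l z, 0 ≤ uh l z)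
    (huseg : ∀ p q : Fin m, ∀ z, p ≠ q → u p z * u q z = 0)
    (huhseg : ∀ p q : Fin m, ∀ z, p ≠ q → uh p z * uh q z = 0)
    (bd : ι → Prop) (hbd : ∀ l z, bd z → u l z = uh l z)
    (uhat uhhat : Fin m → ι → ℝ)
    (huhat : ∀ l z, uhat l z = u l z - ∑ p ∈ Finset.univ.erase l, u p z)
    (huhhat : ∀ l z, uhhat l z = uh l z - ∑ p ∈ Finset.univ.erase l, uh p z)
    (M : ℝ)
    (hMub : ∀ l : Fin m, ∀ z : ι, uhat l z - uhhat l z + V z ≤ M)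
    (l₀ : Fin m) (z₀ : ι)
    (hMatt : M = uhat l₀ z₀ - uhhat l₀ z₀ + V z₀)
    (hz₀ : u l₀ z₀ = 0 ∧ uh l₀ z₀ = 0)
    (hMV : ∀ z : ι, V z < M) :
    ∃ t₀ : Fin m, t₀ ≠ l₀ ∧ (∀ l : Fin m, l ≠ t₀ → u l z₀ = 0) ∧
      M = uh t₀ z₀ - u t₀ z₀ + V z₀ ∧
      (∃ l : Fin m, ∃ z : ι, M ≤ uhhat l z - uhat l z + V z) :=
  stmt_10_general u uh V hupos huhseg uhat uhhat huhat huhhat M hMub l₀ z₀ hMatt hz₀ hMV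
end

section
/- Suppose two families of nonnegative segregated grid functions (u_l) and (u_h^l) on Ω_h agree on the boundary, each f_l(z,·) is nondecreasing, and: (i) at any interior point where u_l(z) > 0 one has L_h û_l(z) = f_l(z,u_l(z)) up to truncation error bounded by α_h, and L_h û_h^l(z) ≤ f_l(z,u_h^l(z)); then the maximum over the grid of (û_l − û_h^l + V_h), with V_h(x,y) = α_h(x²+y²+1)/4, is attained on the set {u_l ≤ u_h^l}. -/
/-- The 5-point discrete Laplacian on grid functions (mesh size `h`). -/
noncomputable def dLap (h : ℝ) (v : ℤ × ℤ → ℝ) (z : ℤ × ℤ) : ℝ :=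
  (v (z.1 - 1, z.2) + v (z.1 + 1, z.2) - 4 * v z + v (z.1, z.2 - 1) + v (z.1, z.2 + 1)) / h ^ 2

/-- A point of the uniform grid `{0,...,N}²`. -/
def onGrid (N : ℕ) (z : ℤ × ℤ) : Prop := 0 ≤ z.1 ∧ z.1 ≤ N ∧ 0 ≤ z.2 ∧ z.2 ≤ N

/-- An interior point of the uniform grid `{0,...,N}²`. -/
def inGrid (N : ℕ) (z : ℤ × ℤ) : Prop :=
  1 ≤ z.1 ∧ z.1 ≤ (N : ℤ) - 1 ∧ 1 ≤ z.2 ∧ z.2 ≤ (N : ℤ) - 1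

/-!
Put `w := û_l - û_h^l + V_h` and take, among the maximizers of `w` on the grid, one with the
largest first coordinate. If there `u_l > u_h^l`, the point is interior (the families agree on
the boundary), and `L_h û_l ≥ f_l(u_l) - α_h ≥ f_l(u_h^l) - α_h ≥ L_h û_h^l - α_h` while
`L_h V_h = α_h`, so `L_h w ≥ 0`. At a maximum this forces `w` to be constant on the five-point
stencil, so the eastern neighbor is a maximizer further to the right: a contradiction.
-/

theorem dLap_add (h : ℝ) (v w : ℤ × ℤ → ℝ) (z : ℤ × ℤ) :
    dLap h (v + w) z = dLap h v z + dLap h w z := by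
  simp only [dLap, Pi.add_apply]
  ring

theorem dLap_sub (h : ℝ) (v w : ℤ × ℤ → ℝ) (z : ℤ × ℤ) :
    dLap h (v - w) z = dLap h v z - dLap h w z := by
  simp only [dLap, Pi.sub_apply]
  ring

theorem dLap_paraboloid {h : ℝ} (hh : h ≠ 0) (c : ℝ) (z : ℤ × ℤ) :
    dLap h (fun z : ℤ × ℤ => c * ((z.1 * h) ^ 2 + (z.2 * h) ^ 2 + 1) / 4) z = c := by
  simp only [dLap]
  push_cast
  field_simp
  ring

theorem eq_east_of_dLap_nonneg {h : ℝ} (hh : h ≠ 0) {w : ℤ × ℤ → ℝ} {z : ℤ × ℤ}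
    (hW : w (z.1 - 1, z.2) ≤ w z) (hE : w (z.1 + 1, z.2) ≤ w z)
    (hS : w (z.1, z.2 - 1) ≤ w z) (hN : w (z.1, z.2 + 1) ≤ w z)
    (hL : 0 ≤ dLap h w z) :
    w (z.1 + 1, z.2) = w z := by
  rw [dLap, le_div_iff₀ (by positivity), zero_mul] at hL
  linarith

theorem inGrid.onGrid_neighbors {N : ℕ} {z : ℤ × ℤ} (hz : inGrid N z) :
    onGrid N (z.1 - 1, z.2) ∧ onGrid N (z.1 + 1, z.2) ∧
      onGrid N (z.1, z.2 - 1) ∧ onGrid N (z.1, z.2 + 1) := by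
  obtain ⟨_, _, _, _⟩ := hz
  simp only [onGrid]
  omega

theorem onGrid_iff_mem (N : ℕ) (z : ℤ × ℤ) :
    onGrid N z ↔ z ∈ Finset.Icc (0 : ℤ) N ×ˢ Finset.Icc (0 : ℤ) N := by
  simp [onGrid, and_assoc]

theorem exists_rightmost_maximizer (N : ℕ) (w : ℤ × ℤ → ℝ) :
    ∃ z, onGrid N z ∧ (∀ z', onGrid N z' → w z' ≤ w z) ∧
      ∀ z', onGrid N z' → w z' = w z → z'.1 ≤ z.1 := by
  simp only [onGrid_iff_mem]
  set G := Finset.Icc (0 : ℤ) N ×ˢ Finset.Icc (0 : ℤ) N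
  obtain ⟨z₀, hz₀, hmax₀⟩ := G.exists_max_image w ⟨(0, 0), by simp [G]⟩
  obtain ⟨z, hz, hright⟩ :=
    (G.filter (fun z => w z = w z₀)).exists_max_image Prod.fst ⟨z₀, by simp [hz₀]⟩
  rw [Finset.mem_filter] at hz
  refine ⟨z, hz.1, fun z' hz' => hz.2 ▸ hmax₀ z' hz', fun z' hz' hwz' => ?_⟩
  exact hright z' (Finset.mem_filter.mpr ⟨hz', hwz'.trans hz.2⟩)

theorem stmt_15_general (m N : ℕ) (h : ℝ) (hh : 0 < h)
    (f : Fin m → ℤ × ℤ → ℝ → ℝ) (hfmono : ∀ l z, Monotone (f l z))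
    (u uh : Fin m → ℤ × ℤ → ℝ)
    (huhpos : ∀ l z, onGrid N z → 0 ≤ uh l z)
    (hbdry : ∀ l z, onGrid N z → ¬inGrid N z → u l z = uh l z)
    (uhat uhhat : Fin m → ℤ × ℤ → ℝ)
    (αh : ℝ)
    (V : ℤ × ℤ → ℝ)
    (hV : ∀ z : ℤ × ℤ, V z = αh * ((z.1 * h) ^ 2 + (z.2 * h) ^ 2 + 1) / 4)
    (hu_eq : ∀ l z, inGrid N z → 0 < u l z →
      |dLap h (uhat l) z - f l z (u l z)| ≤ αh)
    (huh_le : ∀ l z, inGrid N z → 0 < u l z →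
      dLap h (uhhat l) z ≤ f l z (uh l z)) :
    ∀ l : Fin m, ∃ z : ℤ × ℤ, onGrid N z ∧ u l z ≤ uh l z ∧
      ∀ z' : ℤ × ℤ, onGrid N z' →
        uhat l z' - uhhat l z' + V z' ≤ uhat l z - uhhat l z + V z := by
  intro l
  obtain ⟨z, hz, hmax, hright⟩ := exists_rightmost_maximizer N (uhat l - uhhat l + V)
  refine ⟨z, hz, ?_, hmax⟩
  by_contra! hlt
  have hu : 0 < u l z := (huhpos l z hz).trans_lt hlt
  have hin : inGrid N z := by
    by_contra hb
    exact hlt.ne' (hbdry l z hz hb)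
  have hLV : dLap h V z = αh := by
    rw [funext hV]
    exact dLap_paraboloid hh.ne' αh z
  have hL : 0 ≤ dLap h (uhat l - uhhat l + V) z := by
    rw [dLap_add, dLap_sub, hLV]
    have hu_lower := (abs_le.mp (hu_eq l z hin hu)).1
    linarith [huh_le l z hin hu, hfmono l z hlt.le]
  obtain ⟨hW, hE, hS, hN⟩ := hin.onGrid_neighbors
  have heast := eq_east_of_dLap_nonneg hh.ne' (hmax _ hW) (hmax _ hE) (hmax _ hS) (hmax _ hN) hL
  exact absurd (hright _ hE heast) (by simp)

/-- Lemma 3.1 of the paper: for two nonnegative segregated families of grid functions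
agreeing on the boundary, with `f l z ·` nondecreasing, if at interior points where
`u l z > 0` one has `L_h û l z = f l z (u l z)` up to a truncation error bounded by
`α_h` and `L_h û_h l z ≤ f l z (u_h l z)`, then the maximum over the grid of
`û l - û_h l + V_h`, where `V_h (x,y) = α_h (x² + y² + 1)/4`, is attained on the set
`{u l ≤ u_h l}`. -/
theorem stmt_15 (m N : ℕ) (hN : 1 ≤ N) (h : ℝ) (hh : 0 < h)
    (f : Fin m → ℤ × ℤ → ℝ → ℝ) (hfmono : ∀ l z, Monotone (f l z))
    (u uh : Fin m → ℤ × ℤ → ℝ)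
    (hupos : ∀ l z, onGrid N z → 0 ≤ u l z)
    (huhpos : ∀ l z, onGrid N z → 0 ≤ uh l z)
    (huseg : ∀ p q : Fin m, ∀ z, onGrid N z → p ≠ q → u p z * u q z = 0)
    (huhseg : ∀ p q : Fin m, ∀ z, onGrid N z → p ≠ q → uh p z * uh q z = 0)
    (hbdry : ∀ l z, onGrid N z → ¬inGrid N z → u l z = uh l z)
    (uhat uhhat : Fin m → ℤ × ℤ → ℝ)
    (huhat : ∀ l z, uhat l z = u l z - ∑ p ∈ Finset.univ.erase l, u p z)
    (huhhat : ∀ l z, uhhat l z = uh l z - ∑ p ∈ Finset.univ.erase l, uh p z)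
    (αh : ℝ) (hαh : 0 ≤ αh)
    (V : ℤ × ℤ → ℝ)
    (hV : ∀ z : ℤ × ℤ, V z = αh * ((z.1 * h) ^ 2 + (z.2 * h) ^ 2 + 1) / 4)
    (hu_eq : ∀ l z, inGrid N z → 0 < u l z →
      |dLap h (uhat l) z - f l z (u l z)| ≤ αh)
    (huh_le : ∀ l z, inGrid N z → 0 < u l z →
      dLap h (uhhat l) z ≤ f l z (uh l z)) :
    ∀ l : Fin m, ∃ z : ℤ × ℤ, onGrid N z ∧ u l z ≤ uh l z ∧
      ∀ z' : ℤ × ℤ, onGrid N z' →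
        uhat l z' - uhhat l z' + V z' ≤ uhat l z - uhhat l z + V z :=
  stmt_15_general m N h hh f hfmono u uh huhpos hbdry uhat uhhat αh V hV hu_eq huh_le
end
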